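/- The function x ↦ x / log(1/(1-x)) is Lebesgue integrable on the open interval (0,1), and ∫₀¹ x / log(1/(1-x)) dx = log 2. -/
import Mathlib
open MeasureTheory intervalIntegral Real

lemma inner_s (x : ℝ) (hx : x ∈ Set.Ioo (0:ℝ) 1) :
    ∫ s in Set.Ioo (0:ℝ) 1, x ^ s = (x - 1) / Real.log x := by
  obtain ⟨hx0, hx1⟩ := hx
  have hlog : Real.log x ≠ 0 := ne_of_lt (Real.log_neg hx0 hx1)
  rw [← integral_Ioc_eq_integral_Ioo, ← intervalIntegral.integral_of_le zero_le_one]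
  have h : ∀ s : ℝ, x ^ s = Real.exp (Real.log x * s) := fun s => Real.rpow_def_of_pos hx0 s
  simp_rw [h]
  rw [intervalIntegral.integral_comp_mul_left Real.exp hlog, mul_zero, mul_one,
    integral_exp, Real.exp_log hx0, Real.exp_zero, smul_eq_mul]
  ring

lemma inner_x (s : ℝ) (hs : s ∈ Set.Ioo (0:ℝ) 1) :
    ∫ x in Set.Ioo (0:ℝ) 1, x ^ s = 1 / (s + 1) := by
  rw [← integral_Ioc_eq_integral_Ioo, ← intervalIntegral.integral_of_le zero_le_one,
    integral_rpow (Or.inl (by linarith [hs.1]))]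
  rw [Real.one_rpow, Real.zero_rpow (by linarith [hs.1])]
  ring

lemma key_fubini : ∫ x in Set.Ioo (0:ℝ) 1, (x - 1) / Real.log x = Real.log 2 := by
  set μ := volume.restrict (Set.Ioo (0:ℝ) 1) with hμ
  haveI : Fact (volume (Set.Ioo (0:ℝ) 1) < ⊤) := ⟨by simp⟩
  have hmeas : Measurable (fun p : ℝ × ℝ => p.1 ^ p.2) := by measurability
  have hint : Integrable (Function.uncurry fun x s : ℝ => x ^ s) (μ.prod μ) := by
    refine Integrable.mono' (integrable_const 1) hmeas.aestronglyMeasurable ?_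
    rw [hμ, Measure.prod_restrict]
    filter_upwards [ae_restrict_mem (measurableSet_Ioo.prod measurableSet_Ioo)] with p hp
    obtain ⟨⟨hx0, hx1⟩, ⟨hs0, _⟩⟩ := hp
    rw [Function.uncurry, Real.norm_eq_abs, abs_of_nonneg (Real.rpow_nonneg hx0.le _)]
    exact Real.rpow_le_one hx0.le hx1.le hs0.le
  have swap := integral_integral_swap hint
  have lhs : (∫ x, (∫ s, x ^ s ∂μ) ∂μ) = ∫ x in Set.Ioo (0:ℝ) 1, (x - 1) / Real.log x := by
    refine integral_congr_ae ?_
    filter_upwards [ae_restrict_mem measurableSet_Ioo] with x hx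
    exact inner_s x hx
  have rhs : (∫ s, (∫ x, x ^ s ∂μ) ∂μ) = ∫ s in Set.Ioo (0:ℝ) 1, 1 / (s + 1) := by
    refine integral_congr_ae ?_
    filter_upwards [ae_restrict_mem measurableSet_Ioo] with s hs
    exact inner_x s hs
  rw [← lhs, swap, rhs, ← integral_Ioc_eq_integral_Ioo,
    ← intervalIntegral.integral_of_le zero_le_one,
    intervalIntegral.integral_comp_add_right (fun u => 1 / u) 1,
    integral_one_div (by norm_num)]
  norm_num

lemma bound_aux (x : ℝ) (hx : x ∈ Set.Ioo (0:ℝ) 1) :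
    ‖x / Real.log (1 / (1 - x))‖ ≤ 1 := by
  obtain ⟨hx0, hx1⟩ := hx
  have h1x : (0:ℝ) < 1 - x := by linarith
  have hlog : Real.log (1 - x) ≤ -x := by
    have := Real.log_le_sub_one_of_pos h1x
    linarith
  rw [one_div, Real.log_inv]
  have hden : x ≤ -Real.log (1 - x) := by linarith
  have hdpos : 0 < -Real.log (1 - x) := lt_of_lt_of_le hx0 hden
  rw [Real.norm_eq_abs, abs_of_nonneg (div_nonneg hx0.le hdpos.le)]
  rw [div_le_one hdpos]
  exact hden

/-- The function `x ↦ x / log (1 / (1 - x))` is Lebesgue integrable on `(0, 1)` and its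
integral over `(0, 1)` equals `log 2`. -/
theorem integral_div_log_one_div_one_sub_eq_log_two :
    IntegrableOn (fun x : ℝ => x / Real.log (1 / (1 - x))) (Set.Ioo 0 1) volume ∧
    ∫ x in Set.Ioo (0:ℝ) 1, x / Real.log (1 / (1 - x)) ∂volume = Real.log 2 := by
  haveI : Fact (volume (Set.Ioo (0:ℝ) 1) < ⊤) := ⟨by simp⟩
  constructor
  · refine Integrable.mono' (integrable_const 1) ?_ ?_
    · exact (measurable_id.div (Real.measurable_log.comp
        (measurable_const.div (measurable_const.sub measurable_id)))).aestronglyMeasurable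
    · filter_upwards [ae_restrict_mem measurableSet_Ioo] with x hx using bound_aux x hx
  · have h := intervalIntegral.integral_comp_sub_left (a:=(0:ℝ)) (b:=1)
      (fun y => (y - 1) / Real.log y) 1
    norm_num at h
    rw [← integral_Ioc_eq_integral_Ioo, ← intervalIntegral.integral_of_le zero_le_one, ← key_fubini,
      ← integral_Ioc_eq_integral_Ioo (f := fun y => (y - 1) / Real.log y),
      ← intervalIntegral.integral_of_le zero_le_one, ← h]
    apply intervalIntegral.integral_congr
    intro x _
    simp only [one_div, Real.log_inv, div_neg]
    rw [neg_div]
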